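/- arXiv:1811.10843 — 4 statements merged into one kernel-verified Lean document; each statement's English description precedes it below -/
import Mathlib

section
/- Let D be a self-adjoint (possibly unbounded) operator on a Hilbert space H with domain dom(D), and let b be a bounded operator on H such that b·dom(D) ⊆ dom(D) and the commutator [D,b] = Db − bD is bounded on dom(D). Then the adjoint b* also satisfies b*·dom(D) ⊆ dom(D), and on dom(D) the commutator [D,b*] equals −([D,b])*. -/
/-!
For `ξ, x ∈ dom D`, symmetry of `D` and `b (D x) = D (b x) - B x` give
`⟪b* D ξ - B* ξ, x⟫ = ⟪b* ξ, D x⟫`. This says that `b* ξ` lies in the domain of `D* = D`,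
with `D (b* ξ) = b* D ξ - B* ξ`.
-/

open scoped InnerProductSpace

namespace LinearPMap

variable {𝕜 E : Type*} [RCLike 𝕜] [NormedAddCommGroup E] [InnerProductSpace 𝕜 E]
  [CompleteSpace E] {A : E →ₗ.[𝕜] E}

theorem _root_.IsSelfAdjoint.isFormalAdjoint (hA : IsSelfAdjoint A) : A.IsFormalAdjoint A := by
  have h := adjoint_isFormalAdjoint (T := A) hA.dense_domain
  rwa [isSelfAdjoint_def.mp hA] at h

theorem _root_.IsSelfAdjoint.exists_mem_domain_apply_eq_of_inner (hA : IsSelfAdjoint A)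
    {y w : E} (h : ∀ x : A.domain, ⟪w, x⟫_𝕜 = ⟪y, A x⟫_𝕜) :
    ∃ hy : y ∈ A.domain, A ⟨y, hy⟩ = w := by
  have key : ∃ hy : y ∈ A.adjoint.domain, A.adjoint ⟨y, hy⟩ = w :=
    ⟨mem_adjoint_domain_of_exists y ⟨w, h⟩, adjoint_apply_eq hA.dense_domain _ h⟩
  rwa [isSelfAdjoint_def.mp hA] at key

variable {b B : E →L[𝕜] E} (hb : ∀ x ∈ A.domain, b x ∈ A.domain)

theorem inner_adjoint_apply_sub_adjoint_commutator (hA : A.IsFormalAdjoint A)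
    (hB : ∀ x : A.domain, B x = A ⟨b x, hb x x.2⟩ - b (A x)) (ξ x : A.domain) :
    ⟪b.adjoint (A ξ) - B.adjoint ξ, x⟫_𝕜 = ⟪b.adjoint ξ, A x⟫_𝕜 := by
  rw [inner_sub_left, ContinuousLinearMap.adjoint_inner_left,
    ContinuousLinearMap.adjoint_inner_left, ContinuousLinearMap.adjoint_inner_left, hB,
    inner_sub_right, hA ξ ⟨b x, hb x x.2⟩, sub_sub_cancel]

end LinearPMap

open LinearPMap

/-- If `b` is a bounded operator preserving the domain of a self-adjoint operator `D`
with bounded commutator `[D,b]` (with bounded extension `B`), then the adjoint `b*` also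
preserves the domain and `[D,b*] = -([D,b])*` on the domain. -/
theorem adjoint_preserves_domain_and_commutator
    {H : Type*} [NormedAddCommGroup H] [InnerProductSpace ℂ H] [CompleteSpace H]
    (D : H →ₗ.[ℂ] H) (hD : IsSelfAdjoint D)
    (b : H →L[ℂ] H) (hb : ∀ ξ ∈ D.domain, b ξ ∈ D.domain)
    (B : H →L[ℂ] H)
    (hB : ∀ ξ : D.domain, B (ξ : H) = D ⟨b (ξ : H), hb (ξ : H) ξ.2⟩ - b (D ξ)) :
    ∃ hbs : ∀ ξ ∈ D.domain, ContinuousLinearMap.adjoint b ξ ∈ D.domain,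
      ∀ ξ : D.domain,
        D ⟨ContinuousLinearMap.adjoint b (ξ : H), hbs (ξ : H) ξ.2⟩
            - ContinuousLinearMap.adjoint b (D ξ)
          = - (ContinuousLinearMap.adjoint B (ξ : H)) := by
  have h (ξ : D.domain) := hD.exists_mem_domain_apply_eq_of_inner
    (inner_adjoint_apply_sub_adjoint_commutator hb hD.isFormalAdjoint hB ξ)
  refine ⟨fun ξ hξ => (h ⟨ξ, hξ⟩).1, fun ξ => ?_⟩
  rw [(h ξ).2, sub_sub_cancel_left]
end

section
/- Let D be a self-adjoint operator on a Hilbert space H, and let (a_n) be a sequence of bounded operators on H, each preserving dom(D), with ‖[D,a_n]‖ ≤ 1 for all n, converging in operator norm to a bounded operator a. Then a preserves dom(D), [D,a] is bounded, and ‖[D,a]‖ ≤ 1. -/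
/-!
For `ξ ∈ dom D` and `η ∈ dom D`, symmetry of `D` gives
`⟪[D, aₙ] ξ, η⟫ = ⟪aₙ ξ, D η⟫ - ⟪aₙ (D ξ), η⟫`, and the right-hand side converges to
`⟪a ξ, D η⟫ - ⟪a (D ξ), η⟫` as `aₙ → a`. Hence this functional of `η` is bounded by `‖ξ‖ ‖η‖`,
so `η ↦ ⟪a ξ, D η⟫` is continuous on `dom D`: `a ξ ∈ dom D† = dom D`, and
`D (a ξ) - a (D ξ)` is represented by a functional of norm at most `‖ξ‖`.
-/

open Filter Topology LinearPMap
open scoped InnerProductSpace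

section

variable {𝕜 E F : Type*} [RCLike 𝕜]
  [NormedAddCommGroup E] [InnerProductSpace 𝕜 E] [NormedAddCommGroup F] [InnerProductSpace 𝕜 F]

theorem norm_le_of_dense_of_forall_norm_inner_le {s : Set E} (hs : Dense s) {w : E} {C : ℝ}
    (hC : 0 ≤ C) (h : ∀ η ∈ s, ‖⟪w, η⟫_𝕜‖ ≤ C * ‖η‖) : ‖w‖ ≤ C := by
  have hclosed : IsClosed {η : E | ‖⟪w, η⟫_𝕜‖ ≤ C * ‖η‖} :=
    isClosed_le (continuous_const.inner continuous_id).norm (continuous_const.mul continuous_norm)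
  have hall : ∀ η, ‖⟪w, η⟫_𝕜‖ ≤ C * ‖η‖ := fun η => closure_minimal h hclosed (hs η)
  rw [← innerSL_apply_norm 𝕜 w]
  exact ContinuousLinearMap.opNorm_le_bound _ hC hall

namespace LinearPMap

theorem IsFormalAdjoint.norm_inner_sub_le_of_tendsto {D : E →ₗ.[𝕜] E} (hD : D.IsFormalAdjoint D)
    {a : E →L[𝕜] E} {b : ℕ → E →L[𝕜] E} (hb : Tendsto b atTop (𝓝 a)) {ξ : D.domain}
    (hmem : ∀ n, b n ξ ∈ D.domain) {c : ℝ} (hbound : ∀ n, ‖D ⟨b n ξ, hmem n⟩ - b n (D ξ)‖ ≤ c)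
    (η : D.domain) : ‖⟪a ξ, D η⟫_𝕜 - ⟪a (D ξ), (η : E)⟫_𝕜‖ ≤ c * ‖(η : E)‖ := by
  have hcont : Continuous fun f : E →L[𝕜] E => ⟪f ξ, D η⟫_𝕜 - ⟪f (D ξ), (η : E)⟫_𝕜 := by
    fun_prop
  refine le_of_tendsto ((hcont.tendsto a).comp hb).norm (Eventually.of_forall fun n => ?_)
  calc ‖⟪b n ξ, D η⟫_𝕜 - ⟪b n (D ξ), (η : E)⟫_𝕜‖
      = ‖⟪D ⟨b n ξ, hmem n⟩ - b n (D ξ), (η : E)⟫_𝕜‖ := by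
        rw [inner_sub_left, hD ⟨b n ξ, hmem n⟩ η]
    _ ≤ c * ‖(η : E)‖ := (norm_inner_le_norm _ _).trans (by gcongr; exact hbound n)

variable [CompleteSpace E]

theorem exists_mem_adjoint_domain_norm_adjoint_sub_le {T : E →ₗ.[𝕜] F}
    (hT : Dense (T.domain : Set E)) {y : F} {z : E} {C : ℝ} (hC : 0 ≤ C)
    (h : ∀ η : T.domain, ‖⟪y, T η⟫_𝕜 - ⟪z, (η : E)⟫_𝕜‖ ≤ C * ‖(η : E)‖) :
    ∃ hy : y ∈ T†.domain, ‖T† ⟨y, hy⟩ - z‖ ≤ C := by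
  have hy : y ∈ T†.domain := by
    let L : T.domain →ₗ[𝕜] 𝕜 :=
      (innerₛₗ 𝕜 y).comp T.toFun - (innerₛₗ 𝕜 z).comp T.domain.subtype
    have hsplit : (innerₛₗ 𝕜 y).comp T.toFun = L + (innerₛₗ 𝕜 z).comp T.domain.subtype := by
      simp [L]
    rw [mem_adjoint_domain_iff, hsplit]
    exact (AddMonoidHomClass.continuous_of_bound L C h).add
      ((innerSL 𝕜 z).comp T.domain.subtypeL).continuous
  refine ⟨hy, norm_le_of_dense_of_forall_norm_inner_le (𝕜 := 𝕜) hT hC fun η hη => ?_⟩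
  rw [inner_sub_left, adjoint_isFormalAdjoint hT ⟨y, hy⟩ ⟨η, hη⟩]
  exact h ⟨η, hη⟩

theorem _root_.IsSelfAdjoint.isFormalAdjoint_s2 {D : E →ₗ.[𝕜] E} (hD : IsSelfAdjoint D) :
    D.IsFormalAdjoint D := by
  simpa only [isSelfAdjoint_def.mp hD] using adjoint_isFormalAdjoint hD.dense_domain

theorem _root_.IsSelfAdjoint.exists_mem_domain_norm_sub_le {D : E →ₗ.[𝕜] E}
    (hD : IsSelfAdjoint D) {y z : E} {C : ℝ} (hC : 0 ≤ C)
    (h : ∀ η : D.domain, ‖⟪y, D η⟫_𝕜 - ⟪z, (η : E)⟫_𝕜‖ ≤ C * ‖(η : E)‖) :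
    ∃ hy : y ∈ D.domain, ‖D ⟨y, hy⟩ - z‖ ≤ C := by
  have := exists_mem_adjoint_domain_norm_adjoint_sub_le hD.dense_domain hC h
  rwa [isSelfAdjoint_def.mp hD] at this

end LinearPMap

end

/-- Lower semicontinuity of `L_D(a) = ‖[D,a]‖`: if `(aₙ)` is a sequence of bounded operators
preserving the domain of the self-adjoint operator `D`, with `‖[D,aₙ]‖ ≤ 1` for all `n`,
converging in operator norm to `a`, then `a` preserves `dom D`, `[D,a]` is bounded and
`‖[D,a]‖ ≤ 1`. -/
theorem commutator_norm_le_of_tendsto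
    {H : Type*} [NormedAddCommGroup H] [InnerProductSpace ℂ H] [CompleteSpace H]
    (D : H →ₗ.[ℂ] H) (hD : IsSelfAdjoint D)
    (a : H →L[ℂ] H) (aseq : ℕ → H →L[ℂ] H)
    (hpres : ∀ n, ∀ ξ ∈ D.domain, aseq n ξ ∈ D.domain)
    (hbound : ∀ n, ∀ ξ : D.domain,
      ‖D ⟨aseq n (ξ : H), hpres n (ξ : H) ξ.2⟩ - aseq n (D ξ)‖ ≤ ‖(ξ : H)‖)
    (hlim : Filter.Tendsto aseq Filter.atTop (nhds a)) :
    ∃ ha : ∀ ξ ∈ D.domain, a ξ ∈ D.domain,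
      ∀ ξ : D.domain, ‖D ⟨a (ξ : H), ha (ξ : H) ξ.2⟩ - a (D ξ)‖ ≤ ‖(ξ : H)‖ := by
  have key (ξ : D.domain) : ∃ hξ : a ξ ∈ D.domain, ‖D ⟨a ξ, hξ⟩ - a (D ξ)‖ ≤ ‖(ξ : H)‖ :=
    hD.exists_mem_domain_norm_sub_le (norm_nonneg _)
      (hD.isFormalAdjoint_s2.norm_inner_sub_le_of_tendsto hlim _ (hbound · ξ))
  exact ⟨fun x hx => (key ⟨x, hx⟩).1, fun ξ => (key ξ).2⟩
end

section
/- Let D be a self-adjoint operator on a Hilbert space H and let T be a bounded self-adjoint operator on H. Then for all t ∈ ℝ and all ξ ∈ dom(D) with ‖ξ‖ + ‖Dξ‖ ≤ 1, ‖(exp(itD) − exp(it(D+T)))ξ‖ ≤ |t| · ‖T‖. -/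
/-- Duhamel estimate: let `D` be self-adjoint generating the strongly continuous unitary
group `U t = exp(itD)`, let `T` be bounded self-adjoint, and let `V t = exp(it(D+T))` be
the group generated by `D + T`. If `ξ ∈ dom D` satisfies `‖ξ‖ + ‖Dξ‖ ≤ 1`, then
`‖(exp(itD) - exp(it(D+T)))ξ‖ ≤ |t|·‖T‖` for all `t ∈ ℝ`. -/
theorem duhamel_perturbation_estimate
    {H : Type*} [NormedAddCommGroup H] [InnerProductSpace ℂ H] [CompleteSpace H]
    (D : H →ₗ.[ℂ] H) (hD : IsSelfAdjoint D)
    (T : H →L[ℂ] H) (hT : IsSelfAdjoint T)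
    (U V : ℝ → H →L[ℂ] H)
    (hU0 : U 0 = 1) (hV0 : V 0 = 1)
    (hUadd : ∀ s t : ℝ, U (s + t) = (U s).comp (U t))
    (hVadd : ∀ s t : ℝ, V (s + t) = (V s).comp (V t))
    (hUiso : ∀ (t : ℝ) (ξ : H), ‖U t ξ‖ = ‖ξ‖)
    (hViso : ∀ (t : ℝ) (ξ : H), ‖V t ξ‖ = ‖ξ‖)
    (hUdom : ∀ t : ℝ, ∀ ξ ∈ D.domain, U t ξ ∈ D.domain)
    (hUder : ∀ (ξ : D.domain) (t : ℝ),
      HasDerivAt (fun s : ℝ => U s (ξ : H)) (Complex.I • U t (D ξ)) t)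
    (hVder : ∀ (ξ : D.domain) (t : ℝ),
      HasDerivAt (fun s : ℝ => V s (ξ : H)) (Complex.I • V t (D ξ + T (ξ : H))) t) :
    ∀ (t : ℝ) (ξ : D.domain), ‖(ξ : H)‖ + ‖D ξ‖ ≤ 1 →
      ‖U t (ξ : H) - V t (ξ : H)‖ ≤ |t| * ‖T‖ := by
  -- density of the domain
  have hdense : Dense (D.domain : Set H) := hD.dense_domain
  -- strong continuity of V on all of H
  have hVcont : ∀ η : H, Continuous fun s : ℝ => V s η := by
    have hclosed : IsClosed {η : H | Continuous fun s : ℝ => V s η} := by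
      apply IsSeqClosed.isClosed
      intro x η hx hlim
      have hconv : TendstoUniformly (fun n (s : ℝ) => V s (x n)) (fun s => V s η)
          Filter.atTop := by
        rw [Metric.tendstoUniformly_iff]
        intro ε hε
        filter_upwards [Metric.tendsto_nhds.mp hlim ε hε] with n hn s
        calc dist (V s η) (V s (x n)) = ‖V s (η - x n)‖ := by rw [dist_eq_norm, map_sub]
          _ = ‖η - x n‖ := hViso s _
          _ = dist (x n) η := by rw [dist_eq_norm, norm_sub_rev]
          _ < ε := hn
      exact hconv.continuous (Filter.Eventually.of_forall (f := Filter.atTop) hx).frequently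
    intro η
    refine hclosed.closure_subset ?_
    refine closure_mono ?_ (hdense η)
    rintro y hy
    exact continuous_iff_continuousAt.mpr fun s => (hVder ⟨y, hy⟩ s).continuousAt
  intro t ξ hξ
  -- U s ξ as an element of the domain
  set ζ : ℝ → D.domain := fun s => ⟨U s (ξ : H), hUdom s ξ ξ.2⟩ with hζdef
  -- D (U s ξ) = U s (D ξ)
  have hDζ : ∀ s : ℝ, D (ζ s) = U s (D ξ) := by
    intro s
    have h1 : HasDerivAt (fun r : ℝ => U r ((ζ s : H)))
        (Complex.I • U 0 (D (ζ s))) 0 := hUder (ζ s) 0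
    have h2 : HasDerivAt (fun r : ℝ => U (r + s) (ξ : H)) (Complex.I • U s (D ξ)) 0 := by
      have hh : HasDerivAt (fun r : ℝ => r + s) (1 : ℝ) 0 := (hasDerivAt_id (0 : ℝ)).add_const s
      have h0 : HasDerivAt (fun s : ℝ => U s (ξ : H)) (Complex.I • U s (D ξ)) (0 + s) := by
        simpa using hUder ξ s
      have := h0.scomp (0 : ℝ) hh
      simpa [Function.comp_def] using this
    have h1' : HasDerivAt (fun r : ℝ => U (r + s) (ξ : H)) (Complex.I • U 0 (D (ζ s))) 0 := by
      refine h1.congr_of_eventuallyEq (Filter.Eventually.of_forall fun r => ?_)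
      have := congrArg (fun (W : H →L[ℂ] H) => W (ξ : H)) (hUadd r s)
      simpa [hζdef] using this
    have huniq := h1'.unique h2
    have := smul_right_injective H Complex.I_ne_zero huniq
    simpa [hU0] using this
  -- the interpolating function
  set g : ℝ → H := fun s => V (t - s) (U s (ξ : H)) with hgdef
  -- derivative of g
  have hg : ∀ s : ℝ, HasDerivAt g (-(Complex.I • V (t - s) (T (U s (ξ : H))))) s := by
    intro s
    rw [hasDerivAt_iff_tendsto_slope]
    -- term A : shifted slope of U
    have hslope : Filter.Tendsto (slope (fun r : ℝ => U r (ξ : H)) s) (nhdsWithin s {s}ᶜ)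
        (nhds (Complex.I • U s (D ξ))) := hasDerivAt_iff_tendsto_slope.mp (hUder ξ s)
    set L0 : H := Complex.I • U s (D ξ) with hL0
    have h1 : Filter.Tendsto
        (fun y => V (t - y) (slope (fun r : ℝ => U r (ξ : H)) s y) - V (t - y) L0)
        (nhdsWithin s {s}ᶜ) (nhds 0) := by
      rw [tendsto_zero_iff_norm_tendsto_zero]
      have h0 : Filter.Tendsto (fun y => ‖slope (fun r : ℝ => U r (ξ : H)) s y - L0‖)
          (nhdsWithin s {s}ᶜ) (nhds 0) := by
        have := (hslope.sub_const L0).norm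
        simpa using this
      refine h0.congr fun y => ?_
      rw [← map_sub, hViso]
    have h2 : Filter.Tendsto (fun y => V (t - y) L0) (nhdsWithin s {s}ᶜ)
        (nhds (V (t - s) L0)) := by
      have : Continuous fun y : ℝ => V (t - y) L0 :=
        (hVcont L0).comp (continuous_const.sub continuous_id)
      exact this.continuousAt.tendsto.mono_left nhdsWithin_le_nhds
    have hA : Filter.Tendsto (fun y => V (t - y) (slope (fun r : ℝ => U r (ξ : H)) s y))
        (nhdsWithin s {s}ᶜ) (nhds (V (t - s) L0)) := by
      have := h1.add h2
      simpa using this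
    -- term B : derivative of r ↦ V (t - r) (U s ξ)
    have hB : HasDerivAt (fun r : ℝ => V (t - r) (U s (ξ : H)))
        (-(Complex.I • V (t - s) (D (ζ s) + T (U s (ξ : H))))) s := by
      have h1' := hVder (ζ s) (t - s)
      have hh : HasDerivAt (fun r : ℝ => t - r) (-1 : ℝ) s := by
        simpa using (hasDerivAt_id s).const_sub t
      have h2' : HasDerivAt (fun u : ℝ => V u ((ζ s : H))) (Complex.I • V (t - s) (D (ζ s) + T ((ζ s : H)))) ((fun r : ℝ => t - r) s) := h1'
      have h3 := h2'.scomp s hh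
      rw [neg_one_smul] at h3
      exact h3
    have hBslope := hasDerivAt_iff_tendsto_slope.mp hB
    have heq : ∀ y : ℝ, V (t - y) (slope (fun r : ℝ => U r (ξ : H)) s y)
        + slope (fun r : ℝ => V (t - r) (U s (ξ : H))) s y = slope g s y := by
      intro y
      simp only [slope_def_module, hgdef]
      rw [ContinuousLinearMap.map_smul_of_tower, map_sub, ← smul_add]
      congr 1
      abel
    have hval : V (t - s) L0 + (-(Complex.I • V (t - s) (D (ζ s) + T (U s (ξ : H)))))
        = -(Complex.I • V (t - s) (T (U s (ξ : H)))) := by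
      rw [hL0, hDζ s, map_add, smul_add, map_smul]
      abel
    have := (hA.add hBslope)
    rw [hval] at this
    exact this.congr heq
  -- bound on the derivative
  have hξ1 : ‖(ξ : H)‖ ≤ 1 := le_trans (le_add_of_nonneg_right (norm_nonneg _)) hξ
  have bound : ∀ s : ℝ, ‖-(Complex.I • V (t - s) (T (U s (ξ : H))))‖ ≤ ‖T‖ := by
    intro s
    rw [norm_neg, norm_smul, Complex.norm_I, one_mul, hViso]
    calc ‖T (U s (ξ : H))‖ ≤ ‖T‖ * ‖U s (ξ : H)‖ := T.le_opNorm _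
      _ = ‖T‖ * ‖(ξ : H)‖ := by rw [hUiso]
      _ ≤ ‖T‖ * 1 := mul_le_mul_of_nonneg_left hξ1 (norm_nonneg _)
      _ = ‖T‖ := mul_one _
  -- mean value inequality
  have hmvt := Convex.norm_image_sub_le_of_norm_hasDerivWithin_le
    (f := g) (f' := fun s => -(Complex.I • V (t - s) (T (U s (ξ : H)))))
    (fun s _ => (hg s).hasDerivWithinAt) (fun s _ => bound s) convex_univ
    (Set.mem_univ (0 : ℝ)) (Set.mem_univ t)
  have hg0 : g 0 = V t (ξ : H) := by simp [hgdef, hU0]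
  have hgt : g t = U t (ξ : H) := by simp [hgdef, hV0]
  calc ‖U t (ξ : H) - V t (ξ : H)‖ = ‖g t - g 0‖ := by rw [hg0, hgt]
    _ ≤ ‖T‖ * ‖t - 0‖ := hmvt
    _ = |t| * ‖T‖ := by rw [sub_zero, Real.norm_eq_abs, mul_comm]
end

section
/- Let H be a Hilbert space, x a positive bounded operator on H with ‖x‖ ≤ 1, D₁, D₂ norms (D-norms) on dense subspaces of H with ‖ξ‖ ≤ Dⱼ(ξ), and ε > 0. Define on H ⊕ H the ℂ⊕ℂ-valued inner product ⟨(ξ,η),(ξ',η')⟩ = (⟨xξ,ξ'⟩, ⟨xη,η'⟩), the seminorm Q(z,w) = |z−w|/(2ε) on ℂ⊕ℂ, and D'(ξ,η) = max{D₁(ξ), D₂(η), ‖x(ξ−η)‖/(2ε)}. Then for all ξ,ξ',η,η' ∈ H: Q(⟨(ξ,η),(ξ',η')⟩) ≤ 2·D'(ξ,η)·D'(ξ',η'). -/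
/-!
Moving `x` across the inner product splits the difference of the twisted inner products as
`⟨x(ξ-η), ξ'⟩ + ⟨η, x(ξ'-η')⟩`. By Cauchy–Schwarz this is bounded by
`‖x(ξ-η)‖‖ξ'‖ + ‖η‖‖x(ξ'-η')‖`, and each of the two products is at most
`2ε · D'(ξ,η) · D'(ξ',η')`, since `‖ξ'‖ ≤ D₁(ξ')` and `‖η‖ ≤ D₂(η)`.
-/

namespace LinearMap.IsSymmetric

variable {𝕜 E : Type*} [RCLike 𝕜] [SeminormedAddCommGroup E] [InnerProductSpace 𝕜 E]
  {T : E →ₗ[𝕜] E}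

theorem inner_map_sub_inner_map (hT : T.IsSymmetric) (ξ η ξ' η' : E) :
    inner 𝕜 (T ξ) ξ' - inner 𝕜 (T η) η' = inner 𝕜 (T (ξ - η)) ξ' + inner 𝕜 η (T (ξ' - η')) := by
  rw [← hT η]
  simp only [map_sub, inner_sub_left, inner_sub_right]
  ring

theorem norm_inner_map_sub_inner_map_le (hT : T.IsSymmetric) (ξ η ξ' η' : E) :
    ‖inner 𝕜 (T ξ) ξ' - inner 𝕜 (T η) η'‖ ≤ ‖T (ξ - η)‖ * ‖ξ'‖ + ‖η‖ * ‖T (ξ' - η')‖ := by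
  rw [hT.inner_map_sub_inner_map]
  exact (norm_add_le _ _).trans (add_le_add (norm_inner_le_norm _ _) (norm_inner_le_norm _ _))

end LinearMap.IsSymmetric

theorem twisted_inner_quasi_leibniz_general
    {H : Type*} [NormedAddCommGroup H] [InnerProductSpace ℂ H]
    (x : H →L[ℂ] H) (hx : x.IsPositive)
    (D₁ D₂ : H → ℝ) (hD₁ : ∀ ξ : H, ‖ξ‖ ≤ D₁ ξ) (hD₂ : ∀ ξ : H, ‖ξ‖ ≤ D₂ ξ)
    (ε : ℝ) (hε : 0 < ε) :
    ∀ ξ η ξ' η' : H,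
      ‖(inner ℂ (x ξ) ξ' : ℂ) - (inner ℂ (x η) η' : ℂ)‖ / (2 * ε)
        ≤ 2 * (max (max (D₁ ξ) (D₂ η)) (‖x (ξ - η)‖ / (2 * ε)))
            * (max (max (D₁ ξ')  (D₂ η')) (‖x (ξ' - η')‖ / (2 * ε))) := by
  intro ξ η ξ' η'
  set a := max (max (D₁ ξ) (D₂ η)) (‖x (ξ - η)‖ / (2 * ε))
  set b := max (max (D₁ ξ') (D₂ η')) (‖x (ξ' - η')‖ / (2 * ε))
  have h2ε : 0 < 2 * ε := by positivity
  have hη : ‖η‖ ≤ a := (hD₂ η).trans ((le_max_right _ _).trans (le_max_left _ _))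
  have hξ' : ‖ξ'‖ ≤ b := (hD₁ ξ').trans ((le_max_left _ _).trans (le_max_left _ _))
  have hxa : ‖x (ξ - η)‖ ≤ a * (2 * ε) := (div_le_iff₀ h2ε).mp (le_max_right _ _)
  have hxb : ‖x (ξ' - η')‖ ≤ b * (2 * ε) := (div_le_iff₀ h2ε).mp (le_max_right _ _)
  have ha : 0 ≤ a := (norm_nonneg η).trans hη
  calc ‖(inner ℂ (x ξ) ξ' : ℂ) - (inner ℂ (x η) η' : ℂ)‖ / (2 * ε)
      ≤ (‖x (ξ - η)‖ * ‖ξ'‖ + ‖η‖ * ‖x (ξ' - η')‖) / (2 * ε) := by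
        gcongr
        exact hx.isSymmetric.norm_inner_map_sub_inner_map_le ξ η ξ' η'
    _ ≤ (a * (2 * ε) * b + a * (b * (2 * ε))) / (2 * ε) := by gcongr
    _ = 2 * a * b := by field_simp; ring

/-- Quasi-Leibniz inequality for the `ℂ⊕ℂ`-valued inner product twisted by a positive
contraction `x`: with `Q(z,w) = |z-w|/(2ε)` and
`D'(ξ,η) = max{D₁(ξ), D₂(η), ‖x(ξ-η)‖/(2ε)}`, one has
`Q(⟨(ξ,η),(ξ',η')⟩) ≤ 2·D'(ξ,η)·D'(ξ',η')` where
`⟨(ξ,η),(ξ',η')⟩ = (⟨xξ,ξ'⟩, ⟨xη,η'⟩)`. -/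
theorem twisted_inner_quasi_leibniz
    {H : Type*} [NormedAddCommGroup H] [InnerProductSpace ℂ H] [CompleteSpace H]
    (x : H →L[ℂ] H) (hx : x.IsPositive) (hx1 : ‖x‖ ≤ 1)
    (D₁ D₂ : H → ℝ) (hD₁ : ∀ ξ : H, ‖ξ‖ ≤ D₁ ξ) (hD₂ : ∀ ξ : H, ‖ξ‖ ≤ D₂ ξ)
    (ε : ℝ) (hε : 0 < ε) :
    ∀ ξ η ξ' η' : H,
      ‖(inner ℂ (x ξ) ξ' : ℂ) - (inner ℂ (x η) η' : ℂ)‖ / (2 * ε)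
        ≤ 2 * (max (max (D₁ ξ) (D₂ η)) (‖x (ξ - η)‖ / (2 * ε)))
            * (max (max (D₁ ξ')  (D₂ η')) (‖x (ξ' - η')‖ / (2 * ε))) :=
  twisted_inner_quasi_leibniz_general x hx D₁ D₂ hD₁ hD₂ ε hε
end
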